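/- Let p∈(5,6) and let ζ be a smooth compactly supported axisymmetric function on ℝ³ (depending only on r=√(x₁²+x₂²) and z=x₃). Then −∫_{ℝ³} (Δ̃ζ)·ζ|ζ|^{p−2} r^{p−3} dx ≥ ∫_{ℝ³} |∇̃ζ|² |ζ|^{p−2} r^{p−3} dx − 2∫_{ℝ³} |ζ|^p r^{p−5} dx, where Δ̃ = ∂_r² + (1/r)∂_r + ∂_z², ∇̃ = (∂_r,∂_z), and ∫_{ℝ³} g dx = 2π∫₀^∞∫_ℝ g(r,z) r dr dz for axisymmetric g. -/

import Mathlib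

noncomputable section

open MeasureTheory Real Set
open scoped ENNReal

/-- radial partial derivative of an axisymmetric function -/
def pr (f : ℝ → ℝ → ℝ) (r z : ℝ) : ℝ := deriv (fun s => f s z) r

/-- vertical partial derivative of an axisymmetric function -/
def pz (f : ℝ → ℝ → ℝ) (r z : ℝ) : ℝ := deriv (fun s => f r s) z

/-- integral over `ℝ³` of an axisymmetric function: `2π ∫_ℝ ∫_{r>0} g(r,z) r dr dz`. -/
def axIR (g : ℝ → ℝ → ℝ) : ℝ :=
  2 * π * ∫ z : ℝ, ∫ r in Ioi (0:ℝ), g r z * r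

/-- `Δ̃ = ∂_r² + (1/r)∂_r + ∂_z²` -/
def tildeΔ (f : ℝ → ℝ → ℝ) (r z : ℝ) : ℝ :=
  pr (pr f) r z + (1 / r) * pr f r z + pz (pz f) r z

namespace WDLB

/-- derivative of the first-coordinate section -/
lemma hasDerivAt_sec1 {Φ : ℝ × ℝ → ℝ} (hΦ : ContDiff ℝ (⊤ : ℕ∞) Φ) (r z : ℝ) :
    HasDerivAt (fun s => Φ (s, z)) (fderiv ℝ Φ (r, z) (1, 0)) r := by
  have h := (hΦ.differentiable (by simp) (r, z)).hasFDerivAt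
  have hg : HasDerivAt (fun s : ℝ => (s, z)) ((1 : ℝ), (0 : ℝ)) r :=
    HasDerivAt.prodMk (hasDerivAt_id r) (hasDerivAt_const r z)
  exact h.comp_hasDerivAt r hg

lemma hasDerivAt_sec2 {Φ : ℝ × ℝ → ℝ} (hΦ : ContDiff ℝ (⊤ : ℕ∞) Φ) (r z : ℝ) :
    HasDerivAt (fun t => Φ (r, t)) (fderiv ℝ Φ (r, z) (0, 1)) z := by
  have h := (hΦ.differentiable (by simp) (r, z)).hasFDerivAt
  have hg : HasDerivAt (fun t : ℝ => (r, t)) ((0 : ℝ), (1 : ℝ)) z :=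
    HasDerivAt.prodMk (hasDerivAt_const z r) (hasDerivAt_id z)
  exact h.comp_hasDerivAt z hg

/-- tendsto 0 at ±∞ of compactly supported functions -/
lemma tendsto_zero_of_hcs {f : ℝ → ℝ} (h : HasCompactSupport f) (l : Filter ℝ)
    (hl : l ≤ Filter.cocompact ℝ) : Filter.Tendsto f l (nhds 0) := by
  rw [hasCompactSupport_iff_eventuallyEq, Filter.coclosedCompact_eq_cocompact] at h
  exact (h.filter_mono hl).tendsto

/-- integral over ℝ of the derivative of a compactly supported function is 0 -/
lemma integral_deriv_eq_zero {f f' : ℝ → ℝ} (hd : ∀ x, HasDerivAt f (f' x) x)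
    (hf' : Continuous f') {K : Set ℝ} (hK : IsCompact K)
    (h0 : ∀ x ∉ K, f x = 0) (h0' : ∀ x ∉ K, f' x = 0) : ∫ x, f' x = 0 := by
  have hcs : HasCompactSupport f := HasCompactSupport.intro hK h0
  have hcs' : HasCompactSupport f' := HasCompactSupport.intro hK h0'
  have hint : Integrable f' := hf'.integrable_of_hasCompactSupport hcs'
  have h1 : ∫ x in Iic (0:ℝ), f' x = f 0 - 0 :=
    integral_Iic_of_hasDerivAt_of_tendsto (hd 0).continuousAt.continuousWithinAt
      (fun x _ => hd x) hint.integrableOn (tendsto_zero_of_hcs hcs _ _root_.atBot_le_cocompact)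
  have h2 : ∫ x in Ioi (0:ℝ), f' x = 0 - f 0 :=
    integral_Ioi_of_hasDerivAt_of_tendsto (hd 0).continuousAt.continuousWithinAt
      (fun x _ => hd x) hint.integrableOn (tendsto_zero_of_hcs hcs _ _root_.atTop_le_cocompact)
  rw [← intervalIntegral.integral_Iic_add_Ioi (b := (0:ℝ)) (μ := volume) hint.integrableOn hint.integrableOn, h1, h2]
  ring

/-- key scalar identity -/
lemma sq_mul_abs_rpow {c : ℝ} (hc : 0 < c) (t : ℝ) : t * t * |t| ^ c = |t| ^ (c + 2) := by
  rcases eq_or_ne t 0 with rfl | ht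
  · simp [Real.zero_rpow (by linarith : c + 2 ≠ 0)]
  · have h : |t| ≠ 0 := abs_ne_zero.2 ht
    rw [show c + 2 = c + (2:ℕ) by norm_num, Real.rpow_add_natCast h,
      sq_abs]
    ring


/-- first partial as a function -/
def P1 (F : ℝ × ℝ → ℝ) : ℝ × ℝ → ℝ := fun q => fderiv ℝ F q (1, 0)
/-- second partial as a function -/
def P2 (F : ℝ × ℝ → ℝ) : ℝ × ℝ → ℝ := fun q => fderiv ℝ F q (0, 1)

variable {F : ℝ × ℝ → ℝ}

lemma contDiff_P1 (hF : ContDiff ℝ (⊤ : ℕ∞) F) : ContDiff ℝ (⊤ : ℕ∞) (P1 F) :=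
  (hF.fderiv_right (by simp)).clm_apply contDiff_const

lemma contDiff_P2 (hF : ContDiff ℝ (⊤ : ℕ∞) F) : ContDiff ℝ (⊤ : ℕ∞) (P2 F) :=
  (hF.fderiv_right (by simp)).clm_apply contDiff_const

lemma tsupport_P1_subset : tsupport (P1 F) ⊆ tsupport F :=
  closure_minimal (fun x hx => support_fderiv_subset ℝ (by
    simp only [Function.mem_support, ne_eq] at hx ⊢
    intro h; exact hx (by simp [P1, h]))) (isClosed_tsupport F)

lemma tsupport_P2_subset : tsupport (P2 F) ⊆ tsupport F :=
  closure_minimal (fun x hx => support_fderiv_subset ℝ (by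
    simp only [Function.mem_support, ne_eq] at hx ⊢
    intro h; exact hx (by simp [P2, h]))) (isClosed_tsupport F)

lemma P1_eq_zero {x : ℝ × ℝ} (hx : x ∉ tsupport F) : P1 F x = 0 := by
  have : fderiv ℝ F x = 0 := by
    by_contra h
    exact hx (support_fderiv_subset ℝ (Function.mem_support.2 h))
  simp [P1, this]

lemma P2_eq_zero {x : ℝ × ℝ} (hx : x ∉ tsupport F) : P2 F x = 0 := by
  have : fderiv ℝ F x = 0 := by
    by_contra h
    exact hx (support_fderiv_subset ℝ (Function.mem_support.2 h))
  simp [P2, this]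

lemma hasDerivAt_P1 (hF : ContDiff ℝ (⊤ : ℕ∞) F) (r z : ℝ) :
    HasDerivAt (fun s => F (s, z)) (P1 F (r, z)) r := hasDerivAt_sec1 hF r z

lemma hasDerivAt_P2 (hF : ContDiff ℝ (⊤ : ℕ∞) F) (r z : ℝ) :
    HasDerivAt (fun t => F (r, t)) (P2 F (r, z)) z := hasDerivAt_sec2 hF r z


/-- the weighted gradient-square integrand -/
def Wf (F : ℝ × ℝ → ℝ) (p : ℝ) : ℝ → ℝ → ℝ := fun r z =>
  (P1 F (r, z) ^ 2 + P2 F (r, z) ^ 2) * |F (r, z)| ^ (p - 2) * r ^ (p - 2)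

/-- the weighted power integrand -/
def Vf (F : ℝ × ℝ → ℝ) (p : ℝ) : ℝ → ℝ → ℝ := fun r z => |F (r, z)| ^ p * r ^ (p - 4)

/-- the flux in the r-direction -/
def Ftf (F : ℝ × ℝ → ℝ) (p : ℝ) : ℝ → ℝ → ℝ := fun r z =>
  F (r, z) * P1 F (r, z) * |F (r, z)| ^ (p - 2) * r ^ (p - 2) -
    (p - 3) / p * (|F (r, z)| ^ p * r ^ (p - 3))

/-- the r-derivative of the flux in the r-direction -/
def Ftf' (F : ℝ × ℝ → ℝ) (p : ℝ) : ℝ → ℝ → ℝ := fun r z =>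
  (F (r, z) * P1 (P1 F) (r, z) + (p - 1) * P1 F (r, z) ^ 2) * |F (r, z)| ^ (p - 2) * r ^ (p - 2) +
    F (r, z) * P1 F (r, z) * |F (r, z)| ^ (p - 2) * r ^ (p - 3) -
    (p - 3) ^ 2 / p * (|F (r, z)| ^ p * r ^ (p - 4))

/-- the flux in the z-direction -/
def Gf (F : ℝ × ℝ → ℝ) (p : ℝ) : ℝ → ℝ → ℝ := fun r z =>
  F (r, z) * P2 F (r, z) * |F (r, z)| ^ (p - 2) * r ^ (p - 2)

/-- the z-derivative of the flux in the z-direction -/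
def Gf' (F : ℝ × ℝ → ℝ) (p : ℝ) : ℝ → ℝ → ℝ := fun r z =>
  (F (r, z) * P2 (P2 F) (r, z) + (p - 1) * P2 F (r, z) ^ 2) * |F (r, z)| ^ (p - 2) * r ^ (p - 2)

variable {p : ℝ}

lemma key_abs (hp5 : 5 < p) (t : ℝ) : t * t * |t| ^ (p - 4) = |t| ^ (p - 2) := by
  have := sq_mul_abs_rpow (show (0:ℝ) < p - 4 by linarith) t
  rwa [show p - 4 + 2 = p - 2 by ring] at this

lemma hasDerivAt_Ftf (hp5 : 5 < p) (hF : ContDiff ℝ (⊤ : ℕ∞) F) {r : ℝ} (z : ℝ) (hr : 0 < r) :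
    HasDerivAt (fun s => Ftf F p s z) (Ftf' F p r z) r := by
  have hp0 : p ≠ 0 := by linarith
  have h1 := hasDerivAt_P1 hF r z
  have h11 := hasDerivAt_P1 (contDiff_P1 hF) r z
  have habs : HasDerivAt (fun s => |F (s, z)| ^ (p - 2))
      ((p - 2) * |F (r, z)| ^ (p - 2 - 2) * F (r, z) * P1 F (r, z)) r := by
    have := (hasDerivAt_abs_rpow (F (r, z)) (show (1:ℝ) < p - 2 by linarith)).comp r h1
    exact this
  have habsp : HasDerivAt (fun s => |F (s, z)| ^ p)
      (p * |F (r, z)| ^ (p - 2) * F (r, z) * P1 F (r, z)) r := by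
    have := (hasDerivAt_abs_rpow (F (r, z)) (show (1:ℝ) < p by linarith)).comp r h1
    exact this
  have hr2 : HasDerivAt (fun s : ℝ => s ^ (p - 2)) ((p - 2) * r ^ (p - 2 - 1)) r :=
    Real.hasDerivAt_rpow_const (Or.inl hr.ne')
  have hr3 : HasDerivAt (fun s : ℝ => s ^ (p - 3)) ((p - 3) * r ^ (p - 3 - 1)) r :=
    Real.hasDerivAt_rpow_const (Or.inl hr.ne')
  have H := (((h1.mul h11).mul habs).mul hr2).sub ((habsp.mul hr3).const_mul ((p - 3) / p))
  refine H.congr_deriv ?_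
  simp only [Pi.mul_apply]
  rw [show p - 2 - 2 = p - 4 by ring, show p - 2 - 1 = p - 3 by ring,
    show p - 3 - 1 = p - 4 by ring]
  have key2 : |F (r, z)| ^ (p - 2) = F (r, z) ^ 2 * |F (r, z)| ^ (p - 4) := by
    rw [← key_abs hp5 (F (r, z))]; ring
  simp only [Ftf']
  rw [key2]
  field_simp
  ring

lemma hasDerivAt_Gf (hp5 : 5 < p) (hF : ContDiff ℝ (⊤ : ℕ∞) F) (r z : ℝ) :
    HasDerivAt (fun t => Gf F p r t) (Gf' F p r z) z := by
  have h2 := hasDerivAt_P2 hF r z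
  have h22 := hasDerivAt_P2 (contDiff_P2 hF) r z
  have habs : HasDerivAt (fun t => |F (r, t)| ^ (p - 2))
      ((p - 2) * |F (r, z)| ^ (p - 2 - 2) * F (r, z) * P2 F (r, z)) z := by
    have := (hasDerivAt_abs_rpow (F (r, z)) (show (1:ℝ) < p - 2 by linarith)).comp z h2
    exact this
  have H2 := ((h2.mul h22).mul habs).mul_const (r ^ (p - 2))
  refine H2.congr_deriv ?_
  simp only [Pi.mul_apply]
  rw [show p - 2 - 2 = p - 4 by ring]
  have key2 : |F (r, z)| ^ (p - 2) = F (r, z) ^ 2 * |F (r, z)| ^ (p - 4) := by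
    rw [← key_abs hp5 (F (r, z))]; ring
  simp only [Gf']
  rw [key2]
  ring


lemma cont_absF (hF : ContDiff ℝ (⊤ : ℕ∞) F) {c : ℝ} (hc : 0 ≤ c) :
    Continuous (fun w : ℝ × ℝ => |F w| ^ c) :=
  (hF.continuous.abs).rpow_const (fun x => Or.inr hc)

lemma cont_r1 {c : ℝ} (hc : 0 ≤ c) : Continuous (fun w : ℝ × ℝ => w.1 ^ c) :=
  (Real.continuous_rpow_const hc).comp continuous_fst

lemma cont_Wf (hp5 : 5 < p) (hF : ContDiff ℝ (⊤ : ℕ∞) F) :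
    Continuous (fun w : ℝ × ℝ => Wf F p w.1 w.2) := by
  simp only [Wf]
  exact ((((contDiff_P1 hF).continuous.pow 2).add
    (((contDiff_P2 hF).continuous.pow 2))).mul
    (cont_absF hF (by linarith))).mul (cont_r1 (by linarith))

lemma cont_Vf (hp5 : 5 < p) (hF : ContDiff ℝ (⊤ : ℕ∞) F) :
    Continuous (fun w : ℝ × ℝ => Vf F p w.1 w.2) := by
  simp only [Vf]
  exact (cont_absF hF (by linarith)).mul (cont_r1 (by linarith))

lemma cont_Ftf (hp5 : 5 < p) (hF : ContDiff ℝ (⊤ : ℕ∞) F) :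
    Continuous (fun w : ℝ × ℝ => Ftf F p w.1 w.2) := by
  simp only [Ftf]
  exact ((((hF.continuous.mul (contDiff_P1 hF).continuous)).mul
      (cont_absF hF (by linarith))).mul (cont_r1 (by linarith))).sub
    (continuous_const.mul ((cont_absF hF (by linarith)).mul (cont_r1 (by linarith))))

lemma cont_Ftf' (hp5 : 5 < p) (hF : ContDiff ℝ (⊤ : ℕ∞) F) :
    Continuous (fun w : ℝ × ℝ => Ftf' F p w.1 w.2) := by
  simp only [Ftf']
  refine (((((hF.continuous.mul (contDiff_P1 (contDiff_P1 hF)).continuous)).add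
      (continuous_const.mul ((contDiff_P1 hF).continuous.pow 2))).mul
      (cont_absF hF (by linarith))).mul (cont_r1 (by linarith))).add
      ((((hF.continuous.mul (contDiff_P1 hF).continuous)).mul
      (cont_absF hF (by linarith))).mul (cont_r1 (by linarith))) |>.sub
      (continuous_const.mul ((cont_absF hF (by linarith)).mul (cont_r1 (by linarith))))

lemma cont_Gf' (hp5 : 5 < p) (hF : ContDiff ℝ (⊤ : ℕ∞) F) :
    Continuous (fun w : ℝ × ℝ => Gf' F p w.1 w.2) := by
  simp only [Gf']
  exact (((hF.continuous.mul (contDiff_P2 (contDiff_P2 hF)).continuous).add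
    (continuous_const.mul ((contDiff_P2 hF).continuous.pow 2))).mul
    (cont_absF hF (by linarith))).mul (cont_r1 (by linarith))

lemma F_zero {w : ℝ × ℝ} (hw : w ∉ tsupport F) : F w = 0 :=
  image_eq_zero_of_notMem_tsupport hw

lemma P11_eq_zero {w : ℝ × ℝ} (hw : w ∉ tsupport F) : P1 (P1 F) w = 0 :=
  P1_eq_zero (fun h => hw (tsupport_P1_subset h))

lemma P22_eq_zero {w : ℝ × ℝ} (hw : w ∉ tsupport F) : P2 (P2 F) w = 0 :=
  P2_eq_zero (fun h => hw (tsupport_P2_subset h))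

lemma Wf_zero (hp5 : 5 < p) {r z : ℝ} (hw : (r, z) ∉ tsupport F) : Wf F p r z = 0 := by
  simp [Wf, P1_eq_zero hw, P2_eq_zero hw]

lemma Vf_zero (hp5 : 5 < p) {r z : ℝ} (hw : (r, z) ∉ tsupport F) : Vf F p r z = 0 := by
  simp [Vf, F_zero hw, Real.zero_rpow (show p ≠ 0 by linarith)]

lemma Ftf_zero (hp5 : 5 < p) {r z : ℝ} (hw : (r, z) ∉ tsupport F) : Ftf F p r z = 0 := by
  simp [Ftf, F_zero hw, Real.zero_rpow (show p ≠ 0 by linarith)]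

lemma Ftf'_zero (hp5 : 5 < p) {r z : ℝ} (hw : (r, z) ∉ tsupport F) : Ftf' F p r z = 0 := by
  simp [Ftf', F_zero hw, P1_eq_zero hw, Real.zero_rpow (show p ≠ 0 by linarith)]

lemma Gf_zero (hp5 : 5 < p) {r z : ℝ} (hw : (r, z) ∉ tsupport F) : Gf F p r z = 0 := by
  simp [Gf, F_zero hw]

lemma Gf'_zero (hp5 : 5 < p) {r z : ℝ} (hw : (r, z) ∉ tsupport F) : Gf' F p r z = 0 := by
  simp [Gf', F_zero hw, P2_eq_zero hw]


section Master

variable {X : ℝ → ℝ → ℝ}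

/-- slice integrability on `Ioi 0` -/
lemma slice_integrableOn (hcont : Continuous (fun w : ℝ × ℝ => X w.1 w.2))
    (hz : ∀ r z, (r, z) ∉ tsupport F → X r z = 0) (hFc : HasCompactSupport F) (z : ℝ) :
    IntegrableOn (fun r => X r z) (Ioi (0 : ℝ)) volume := by
  have hK : IsCompact (tsupport F) := hFc
  have hcont' : Continuous (fun r : ℝ => X r z) :=
    hcont.comp (continuous_id.prodMk continuous_const)
  have hcs : HasCompactSupport (fun r : ℝ => X r z) := by
    refine HasCompactSupport.intro (hK.image continuous_fst) (fun r hr => ?_)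
    refine hz r z (fun hmem => hr ?_)
    exact ⟨(r, z), hmem, rfl⟩
  exact (hcont'.integrable_of_hasCompactSupport hcs).integrableOn

/-- integrability on the product measure (z first, then r restricted) -/
lemma master_integrable (hcont : Continuous (fun w : ℝ × ℝ => X w.1 w.2))
    (hz : ∀ r z, (r, z) ∉ tsupport F → X r z = 0) (hFc : HasCompactSupport F) :
    Integrable (Function.uncurry (fun z r => X r z))
      ((volume : Measure ℝ).prod ((volume : Measure ℝ).restrict (Ioi 0))) := by
  have hK : IsCompact (tsupport F) := hFc
  have h1 : Integrable (fun w : ℝ × ℝ => X w.2 w.1) ((volume : Measure ℝ).prod volume) := by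
    have hc : Continuous (fun w : ℝ × ℝ => X w.2 w.1) := hcont.comp continuous_swap
    have hcs : HasCompactSupport (fun w : ℝ × ℝ => X w.2 w.1) := by
      refine HasCompactSupport.intro (hK.image continuous_swap) (fun w hw => ?_)
      refine hz w.2 w.1 (fun hmem => hw ?_)
      exact ⟨(w.2, w.1), hmem, rfl⟩
    have h0 : Integrable (fun w : ℝ × ℝ => X w.2 w.1) volume :=
      hc.integrable_of_hasCompactSupport hcs
    rwa [Measure.volume_eq_prod] at h0
  have hmeq : (volume : Measure ℝ).prod ((volume : Measure ℝ).restrict (Ioi 0)) =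
      ((volume : Measure ℝ).prod (volume : Measure ℝ)).restrict (univ ×ˢ Ioi 0) := by
    rw [← Measure.prod_restrict, Measure.restrict_univ]
  rw [hmeq]
  exact h1.restrict

lemma master_inner_integrable (hcont : Continuous (fun w : ℝ × ℝ => X w.1 w.2))
    (hz : ∀ r z, (r, z) ∉ tsupport F → X r z = 0) (hFc : HasCompactSupport F) :
    Integrable (fun z => ∫ r in Ioi (0 : ℝ), X r z) volume := by
  have := (master_integrable hcont hz hFc).integral_prod_left
  exact this

lemma master_swap (hcont : Continuous (fun w : ℝ × ℝ => X w.1 w.2))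
    (hz : ∀ r z, (r, z) ∉ tsupport F → X r z = 0) (hFc : HasCompactSupport F) :
    ∫ z : ℝ, ∫ r in Ioi (0 : ℝ), X r z = ∫ r in Ioi (0 : ℝ), ∫ z : ℝ, X r z :=
  integral_integral_swap (master_integrable hcont hz hFc)

end Master


lemma Ftf_integral_zero (hp5 : 5 < p) (hF : ContDiff ℝ (⊤ : ℕ∞) F) (hFc : HasCompactSupport F)
    (z : ℝ) : ∫ r in Ioi (0 : ℝ), Ftf' F p r z = 0 := by
  have hK : IsCompact (tsupport F) := hFc
  have hder : ∀ r ∈ Ioi (0 : ℝ), HasDerivAt (fun s => Ftf F p s z) (Ftf' F p r z) r :=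
    fun r hr => hasDerivAt_Ftf hp5 hF z hr
  have hcont : ContinuousWithinAt (fun r => Ftf F p r z) (Ici 0) 0 :=
    ((cont_Ftf hp5 hF).comp (continuous_id.prodMk continuous_const)).continuousWithinAt
  have hint : IntegrableOn (fun r => Ftf' F p r z) (Ioi 0) volume :=
    slice_integrableOn (cont_Ftf' hp5 hF) (fun _ _ hw => Ftf'_zero hp5 hw) hFc z
  have hcs : HasCompactSupport (fun r => Ftf F p r z) := by
    refine HasCompactSupport.intro (hK.image continuous_fst) (fun r hr => ?_)
    refine Ftf_zero hp5 (fun hmem => hr ⟨(r, z), hmem, rfl⟩)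
  have htend := tendsto_zero_of_hcs hcs _ _root_.atTop_le_cocompact
  rw [integral_Ioi_of_hasDerivAt_of_tendsto hcont hder hint htend]
  have h0 : Ftf F p 0 z = 0 := by
    simp [Ftf, Real.zero_rpow (show p - 2 ≠ 0 by linarith),
      Real.zero_rpow (show p - 3 ≠ 0 by linarith)]
  rw [h0]; ring

lemma Gf_integral_zero (hp5 : 5 < p) (hF : ContDiff ℝ (⊤ : ℕ∞) F) (hFc : HasCompactSupport F)
    (r : ℝ) : ∫ z : ℝ, Gf' F p r z = 0 := by
  have hK : IsCompact (tsupport F) := hFc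
  refine integral_deriv_eq_zero (f := fun t => Gf F p r t)
    (fun z => hasDerivAt_Gf hp5 hF r z)
    ((cont_Gf' hp5 hF).comp (continuous_const.prodMk continuous_id))
    (hK.image continuous_snd) (fun z hz => ?_) (fun z hz => ?_)
  · exact Gf_zero hp5 (fun hmem => hz ⟨(r, z), hmem, rfl⟩)
  · exact Gf'_zero hp5 (fun hmem => hz ⟨(r, z), hmem, rfl⟩)

lemma main_identity (hp5 : 5 < p) {r : ℝ} (z : ℝ) (hr : 0 < r) :
    (P1 (P1 F) (r, z) + 1 / r * P1 F (r, z) + P2 (P2 F) (r, z)) * F (r, z) *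
        |F (r, z)| ^ (p - 2) * r ^ (p - 3) * r
      = Ftf' F p r z + Gf' F p r z - (p - 1) * Wf F p r z + (p - 3) ^ 2 / p * Vf F p r z := by
  have hp0 : p ≠ 0 := by linarith
  have e2 : r ^ (p - 3) = r ^ (p - 4) * r := by
    rw [← Real.rpow_add_one hr.ne' (p - 4), show p - 4 + 1 = p - 3 by ring]
  have e1 : r ^ (p - 2) = r ^ (p - 4) * r * r := by
    rw [← Real.rpow_add_one hr.ne' (p - 4), ← Real.rpow_add_one hr.ne' (p - 4 + 1),
      show p - 4 + 1 + 1 = p - 2 by ring]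
  simp only [Ftf', Gf', Wf, Vf]
  rw [e1, e2]
  field_simp
  ring

end WDLB

open WDLB in
theorem weighted_diffusion_lower_bound
    (p : ℝ) (hp : p ∈ Set.Ioo (5:ℝ) 6) (ζ : ℝ → ℝ → ℝ)
    (hsmooth : ContDiff ℝ (⊤ : ℕ∞) (fun q : ℝ × ℝ => ζ q.1 q.2))
    (hsupp : HasCompactSupport (fun q : ℝ × ℝ => ζ q.1 q.2)) :
    -(axIR fun r z => tildeΔ ζ r z * ζ r z * |ζ r z| ^ (p - 2) * r ^ (p - 3)) ≥
      (axIR fun r z => ((pr ζ r z) ^ 2 + (pz ζ r z) ^ 2) * |ζ r z| ^ (p - 2) * r ^ (p - 3)) -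
        2 * (axIR fun r z => |ζ r z| ^ p * r ^ (p - 5)) := by
  obtain ⟨hp5, hp6⟩ := hp
  set F : ℝ × ℝ → ℝ := fun q => ζ q.1 q.2 with hFdef
  have hF : ContDiff ℝ (⊤ : ℕ∞) F := hsmooth
  have hFc : HasCompactSupport F := hsupp
  have hζ : ∀ r z, ζ r z = F (r, z) := fun _ _ => rfl
  -- partial derivatives as fderiv applications
  have hpr : ∀ r z, pr ζ r z = P1 F (r, z) := fun r z => (hasDerivAt_P1 hF r z).deriv
  have hpz : ∀ r z, pz ζ r z = P2 F (r, z) := fun r z => (hasDerivAt_P2 hF r z).deriv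
  have hprpr : ∀ r z, pr (pr ζ) r z = P1 (P1 F) (r, z) := by
    intro r z
    have hfun : (fun s => pr ζ s z) = (fun s => P1 F (s, z)) := funext fun s => hpr s z
    show deriv (fun s => pr ζ s z) r = _
    rw [hfun]
    exact (hasDerivAt_P1 (contDiff_P1 hF) r z).deriv
  have hpzpz : ∀ r z, pz (pz ζ) r z = P2 (P2 F) (r, z) := by
    intro r z
    have hfun : (fun t => pz ζ r t) = (fun t => P2 F (r, t)) := funext fun t => hpz r t
    show deriv (fun t => pz ζ r t) z = _
    rw [hfun]
    exact (hasDerivAt_P2 (contDiff_P2 hF) r z).deriv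
  -- integrability of the four basic slices
  have iW : ∀ z, IntegrableOn (fun r => Wf F p r z) (Ioi (0:ℝ)) volume :=
    slice_integrableOn (cont_Wf hp5 hF) (fun _ _ hw => Wf_zero hp5 hw) hFc
  have iV : ∀ z, IntegrableOn (fun r => Vf F p r z) (Ioi (0:ℝ)) volume :=
    slice_integrableOn (cont_Vf hp5 hF) (fun _ _ hw => Vf_zero hp5 hw) hFc
  have iFt : ∀ z, IntegrableOn (fun r => Ftf' F p r z) (Ioi (0:ℝ)) volume :=
    slice_integrableOn (cont_Ftf' hp5 hF) (fun _ _ hw => Ftf'_zero hp5 hw) hFc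
  have iG : ∀ z, IntegrableOn (fun r => Gf' F p r z) (Ioi (0:ℝ)) volume :=
    slice_integrableOn (cont_Gf' hp5 hF) (fun _ _ hw => Gf'_zero hp5 hw) hFc
  -- inner integral of the LHS integrand
  have hinner : ∀ z, (∫ r in Ioi (0:ℝ),
      tildeΔ ζ r z * ζ r z * |ζ r z| ^ (p - 2) * r ^ (p - 3) * r)
      = (∫ r in Ioi (0:ℝ), Gf' F p r z) - (p - 1) * (∫ r in Ioi (0:ℝ), Wf F p r z)
        + (p - 3) ^ 2 / p * (∫ r in Ioi (0:ℝ), Vf F p r z) := by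
    intro z
    have hcongr : EqOn (fun r => tildeΔ ζ r z * ζ r z * |ζ r z| ^ (p - 2) * r ^ (p - 3) * r)
        (fun r => Ftf' F p r z + Gf' F p r z - (p - 1) * Wf F p r z
          + (p - 3) ^ 2 / p * Vf F p r z) (Ioi (0:ℝ)) := by
      intro r hr
      simp only
      rw [tildeΔ, hprpr r z, hpr r z, hpzpz r z, hζ r z]
      exact main_identity hp5 z hr
    have i12 : IntegrableOn (fun r => Ftf' F p r z + Gf' F p r z) (Ioi (0:ℝ)) volume :=
      (iFt z).add (iG z)
    have i3 : IntegrableOn (fun r => (p - 1) * Wf F p r z) (Ioi (0:ℝ)) volume :=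
      (iW z).const_mul _
    have i123 : IntegrableOn
        (fun r => Ftf' F p r z + Gf' F p r z - (p - 1) * Wf F p r z) (Ioi (0:ℝ)) volume :=
      i12.sub i3
    have i4 : IntegrableOn (fun r => (p - 3) ^ 2 / p * Vf F p r z) (Ioi (0:ℝ)) volume :=
      (iV z).const_mul _
    rw [setIntegral_congr_fun measurableSet_Ioi hcongr, integral_add i123 i4,
      integral_sub i12 i3, integral_add (iFt z) (iG z), integral_const_mul _ _,
      integral_const_mul _ _, Ftf_integral_zero hp5 hF hFc z, zero_add]
  -- the z-flux integrates to zero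
  have hGzero : (∫ z : ℝ, ∫ r in Ioi (0:ℝ), Gf' F p r z) = 0 := by
    rw [master_swap (cont_Gf' hp5 hF) (fun _ _ hw => Gf'_zero hp5 hw) hFc]
    have : EqOn (fun r : ℝ => ∫ z : ℝ, Gf' F p r z) (fun _ => (0:ℝ)) (Ioi (0:ℝ)) :=
      fun r _ => Gf_integral_zero hp5 hF hFc r
    rw [setIntegral_congr_fun measurableSet_Ioi this, integral_zero]
  -- total LHS iterated integral
  have hbGint : Integrable (fun z => ∫ r in Ioi (0:ℝ), Gf' F p r z) volume :=
    master_inner_integrable (cont_Gf' hp5 hF) (fun _ _ hw => Gf'_zero hp5 hw) hFc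
  have hbWint : Integrable (fun z => ∫ r in Ioi (0:ℝ), Wf F p r z) volume :=
    master_inner_integrable (cont_Wf hp5 hF) (fun _ _ hw => Wf_zero hp5 hw) hFc
  have hbVint : Integrable (fun z => ∫ r in Ioi (0:ℝ), Vf F p r z) volume :=
    master_inner_integrable (cont_Vf hp5 hF) (fun _ _ hw => Vf_zero hp5 hw) hFc
  have hL : (∫ z : ℝ, ∫ r in Ioi (0:ℝ),
      tildeΔ ζ r z * ζ r z * |ζ r z| ^ (p - 2) * r ^ (p - 3) * r)
      = -(p - 1) * (∫ z : ℝ, ∫ r in Ioi (0:ℝ), Wf F p r z)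
        + (p - 3) ^ 2 / p * (∫ z : ℝ, ∫ r in Ioi (0:ℝ), Vf F p r z) := by
    simp only [hinner]
    have j12 : Integrable (fun z => (∫ r in Ioi (0:ℝ), Gf' F p r z)
        - (p - 1) * (∫ r in Ioi (0:ℝ), Wf F p r z)) volume :=
      hbGint.sub (hbWint.const_mul _)
    have j3 : Integrable (fun z => (p - 3) ^ 2 / p * (∫ r in Ioi (0:ℝ), Vf F p r z)) volume :=
      hbVint.const_mul _
    rw [integral_add j12 j3, integral_sub hbGint (hbWint.const_mul _), integral_const_mul _ _,
      integral_const_mul _ _, hGzero]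
    ring
  -- RHS first integral
  have hR1 : (∫ z : ℝ, ∫ r in Ioi (0:ℝ),
      ((pr ζ r z) ^ 2 + (pz ζ r z) ^ 2) * |ζ r z| ^ (p - 2) * r ^ (p - 3) * r)
      = ∫ z : ℝ, ∫ r in Ioi (0:ℝ), Wf F p r z := by
    refine integral_congr_ae (Filter.Eventually.of_forall fun z => ?_)
    refine setIntegral_congr_fun measurableSet_Ioi fun r hr => ?_
    have hr' : (0:ℝ) < r := hr
    simp only [Wf]
    rw [hpr r z, hpz r z, hζ r z,
      show r ^ (p - 2) = r ^ (p - 3) * r by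
        rw [← Real.rpow_add_one hr'.ne' (p - 3), show p - 3 + 1 = p - 2 by ring]]
    ring
  -- RHS second integral
  have hR2 : (∫ z : ℝ, ∫ r in Ioi (0:ℝ), |ζ r z| ^ p * r ^ (p - 5) * r)
      = ∫ z : ℝ, ∫ r in Ioi (0:ℝ), Vf F p r z := by
    refine integral_congr_ae (Filter.Eventually.of_forall fun z => ?_)
    refine setIntegral_congr_fun measurableSet_Ioi fun r hr => ?_
    have hr' : (0:ℝ) < r := hr
    simp only [Vf]
    rw [hζ r z,
      show r ^ (p - 4) = r ^ (p - 5) * r by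
        rw [← Real.rpow_add_one hr'.ne' (p - 5), show p - 5 + 1 = p - 4 by ring]]
    ring
  -- nonnegativity
  have hIWnn : 0 ≤ ∫ z : ℝ, ∫ r in Ioi (0:ℝ), Wf F p r z := by
    refine integral_nonneg fun z => setIntegral_nonneg measurableSet_Ioi fun r hr => ?_
    have hr' : (0:ℝ) < r := hr
    exact mul_nonneg (mul_nonneg (by positivity) (Real.rpow_nonneg (abs_nonneg _) _))
      (Real.rpow_nonneg hr'.le _)
  have hIVnn : 0 ≤ ∫ z : ℝ, ∫ r in Ioi (0:ℝ), Vf F p r z := by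
    refine integral_nonneg fun z => setIntegral_nonneg measurableSet_Ioi fun r hr => ?_
    have hr' : (0:ℝ) < r := hr
    exact mul_nonneg (Real.rpow_nonneg (abs_nonneg _) _) (Real.rpow_nonneg hr'.le _)
  -- assemble
  simp only [axIR]
  rw [hL, hR1, hR2]
  have hπ := Real.pi_pos
  have hc0 : (p - 3) ^ 2 / p ≤ 2 := by
    rw [div_le_iff₀ (by linarith : (0:ℝ) < p)]
    nlinarith
  set IW := ∫ z : ℝ, ∫ r in Ioi (0:ℝ), Wf F p r z
  set IV := ∫ z : ℝ, ∫ r in Ioi (0:ℝ), Vf F p r z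
  have hmain : 0 ≤ 2 * π * ((p - 2) * IW + (2 - (p - 3) ^ 2 / p) * IV) :=
    mul_nonneg (by positivity)
      (add_nonneg (mul_nonneg (by linarith) hIWnn) (mul_nonneg (by linarith) hIVnn))
  nlinarith [hmain]
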